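/- arXiv:1706.09019 — 2 statements merged into one kernel-verified Lean document; each statement's English description precedes it below -/
import Mathlib

section
/- (Lemma 2(ii).) Let M ∈ ℝ^{k×k} be symmetric positive semidefinite. Then for every Z ∈ ℂ^{n×k} and every V ∈ ℂ^{n×k}, Tr(M Vᴴ A V) ≤ Tr(M H_A(V, Z)); here both traces are real numbers since Vᴴ A V and H_A(V, Z) are Hermitian and M is real symmetric (viewed as a complex matrix via coercion). -/
/-!
`H_A(V, Z) − Vᴴ A V = (V − Z)ᴴ (−A⁻) (V − Z)` is positive semidefinite, and the trace of a product
of two positive semidefinite matrices is nonnegative: writing `M = Bᴴ B`,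
`Tr(Bᴴ B X) = Tr(B X Bᴴ) ≥ 0`.
-/

open Matrix ComplexOrder

/-- `H_A(V, Z) = Vᴴ A⁺ V + Zᴴ A⁻ V + Vᴴ A⁻ Z − Zᴴ A⁻ Z`. -/
noncomputable def Hmat {n k : ℕ} (Ap Am : Matrix (Fin n) (Fin n) ℂ)
    (V Z : Matrix (Fin n) (Fin k) ℂ) : Matrix (Fin k) (Fin k) ℂ :=
  Vᴴ * Ap * V + Zᴴ * Am * V + Vᴴ * Am * Z - Zᴴ * Am * Z

namespace Matrix

variable {m 𝕜 : Type*} [Fintype m] [RCLike 𝕜]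

theorem PosSemidef.exists_eq_conjTranspose_mul_self {P : Matrix m m 𝕜} (hP : P.PosSemidef) :
    ∃ B : Matrix m m 𝕜, P = Bᴴ * B := by
  classical
  open scoped MatrixOrder in exact CStarAlgebra.nonneg_iff_eq_star_mul_self.mp hP.nonneg

theorem PosSemidef.map_ofReal {M : Matrix m m ℝ} (hM : M.PosSemidef) :
    (M.map (algebraMap ℝ 𝕜)).PosSemidef := by
  obtain ⟨B, rfl⟩ := hM.exists_eq_conjTranspose_mul_self
  rw [Matrix.map_mul, conjTranspose_map _ algebraMap_star_comm]
  exact posSemidef_conjTranspose_mul_self _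

theorem PosSemidef.trace_mul_nonneg {P Q : Matrix m m 𝕜} (hP : P.PosSemidef)
    (hQ : Q.PosSemidef) : 0 ≤ (P * Q).trace := by
  obtain ⟨B, rfl⟩ := hP.exists_eq_conjTranspose_mul_self
  rw [Matrix.mul_assoc, trace_mul_comm]
  exact (hQ.mul_mul_conjTranspose_same B).trace_nonneg

theorem PosSemidef.trace_mul_le_trace_mul {P X Y : Matrix m m 𝕜} (hP : P.PosSemidef)
    (hXY : (Y - X).PosSemidef) : (P * X).trace ≤ (P * Y).trace := by
  have := hP.trace_mul_nonneg hXY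
  rwa [Matrix.mul_sub, trace_sub, sub_nonneg] at this

end Matrix

theorem Hmat_sub_conjTranspose_mul_mul {n k : ℕ} (Ap Am : Matrix (Fin n) (Fin n) ℂ)
    (V Z : Matrix (Fin n) (Fin k) ℂ) :
    Hmat Ap Am V Z - Vᴴ * (Ap + Am) * V = (V - Z)ᴴ * (-Am) * (V - Z) := by
  simp only [Hmat, conjTranspose_sub, Matrix.sub_mul, Matrix.mul_sub, Matrix.mul_add,
    Matrix.add_mul, Matrix.mul_neg, Matrix.neg_mul]
  abel

theorem posSemidef_Hmat_sub_conjTranspose_mul_mul {n k : ℕ} (Ap : Matrix (Fin n) (Fin n) ℂ)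
    {Am : Matrix (Fin n) (Fin n) ℂ} (hAm : (-Am).PosSemidef) (V Z : Matrix (Fin n) (Fin k) ℂ) :
    (Hmat Ap Am V Z - Vᴴ * (Ap + Am) * V).PosSemidef :=
  Hmat_sub_conjTranspose_mul_mul Ap Am V Z ▸ hAm.conjTranspose_mul_mul_same (V - Z)

theorem stmt2_general {n k : ℕ} (A Ap Am : Matrix (Fin n) (Fin n) ℂ)
    (hAm : (-Am).PosSemidef)
    (hdec : A = Ap + Am)
    (M : Matrix (Fin k) (Fin k) ℝ) (hM : M.PosSemidef)
    (Z V : Matrix (Fin n) (Fin k) ℂ) :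
    ((M.map Complex.ofReal) * (Vᴴ * A * V)).trace.re
      ≤ ((M.map Complex.ofReal) * Hmat Ap Am V Z).trace.re := by
  subst hdec
  have hle := (hM.map_ofReal (𝕜 := ℂ)).trace_mul_le_trace_mul
    (posSemidef_Hmat_sub_conjTranspose_mul_mul Ap hAm V Z)
  exact (Complex.le_def.mp hle).1

/-- **Lemma 2(ii).** Let `M ∈ ℝ^{k×k}` be symmetric positive semidefinite.
Then for every `Z ∈ ℂ^{n×k}` and every `V ∈ ℂ^{n×k}`,
`Tr(M Vᴴ A V) ≤ Tr(M H_A(V, Z))`; both traces are real numbers since `Vᴴ A V` and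
`H_A(V, Z)` are Hermitian and `M` is real symmetric (viewed as a complex matrix via
the entrywise coercion `ℝ → ℂ`), so the inequality is stated between their real parts. -/
theorem stmt2 {n k : ℕ} (A Ap Am : Matrix (Fin n) (Fin n) ℂ)
    (hA : A.IsHermitian) (hAp : Ap.PosSemidef) (hAm : (-Am).PosSemidef)
    (hdec : A = Ap + Am)
    (M : Matrix (Fin k) (Fin k) ℝ) (hM : M.PosSemidef)
    (Z V : Matrix (Fin n) (Fin k) ℂ) :
    ((M.map Complex.ofReal) * (Vᴴ * A * V)).trace.re
      ≤ ((M.map Complex.ofReal) * Hmat Ap Am V Z).trace.re :=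
  stmt2_general A Ap Am hAm hdec M hM Z V
end

section
/- (Proposition 3.) Let M ∈ ℝ^{k×k} be symmetric positive semidefinite. Suppose there exist x₀ ∈ ℝ^p and Λ₀ ∈ ℝ^{m×ℓ} such that (x₀, V₀, Λ₀) ∈ F(V₀). Suppose a sequence (x_t, V_t, Λ_t), t ≥ 1, satisfies for every t ≥ 0: (x_{t+1}, V_{t+1}, Λ_{t+1}) ∈ F(V_t), and Tr(M H_{A₀}(V_{t+1}, V_t)) ≤ Tr(M H_{A₀}(V, V_t)) for every (x, V, Λ) ∈ F(V_t). Then for every t ≥ 0: (i) F(V_t) is nonempty (indeed (x_t, V_t, Λ_t) ∈ F(V_t) for t ≥ 1 and (x₀, V₀, Λ₀) ∈ F(V₀)); and (ii) Tr(M V_{t+1}ᴴ A₀ V_{t+1}) ≤ Tr(M V_tᴴ A₀ V_t). -/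
open Matrix ComplexOrder

/-- The first standard basis vector `e₁ ∈ ℝ^k`. -/
def e1 (k : ℕ) [NeZero k] : Fin k → ℝ := Pi.single 0 1

/-- The feasible set `F(Z)` of problem `P_III(Z)`: triples `(x, V, Λ)` with `Λ`
entrywise nonpositive, `Ex ≤ f` entrywise, and, for each `i ∈ {1,…,m}`,
`H_{Aᵢ}(V, Z) − Cᵢ + (bᵢᵀx)·e₁e₁ᵀ − Σⱼ Λᵢⱼ Wⱼ ⪯ 0` in the Loewner order
(real matrices coerced to complex). -/
def Feas {n k ℓ m p q : ℕ} [NeZero k]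
    (W : Fin ℓ → Matrix (Fin k) (Fin k) ℝ)
    (Ap Am : Fin m → Matrix (Fin n) (Fin n) ℂ)
    (C : Fin m → Matrix (Fin k) (Fin k) ℝ)
    (b : Fin m → (Fin p → ℝ))
    (E : Matrix (Fin q) (Fin p) ℝ) (f : Fin q → ℝ)
    (Z : Matrix (Fin n) (Fin k) ℂ)
    (x : Fin p → ℝ) (V : Matrix (Fin n) (Fin k) ℂ)
    (Λ : Matrix (Fin m) (Fin ℓ) ℝ) : Prop :=
  (∀ i j, Λ i j ≤ 0) ∧ (∀ i, (E *ᵥ x) i ≤ f i) ∧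
  ∀ i : Fin m,
    (-(Hmat (Ap i) (Am i) V Z - (C i).map Complex.ofReal
        + (((b i ⬝ᵥ x) • vecMulVec (e1 k) (e1 k)).map Complex.ofReal)
        - ∑ j, ((Λ i j • W j).map Complex.ofReal))).PosSemidef

/-! Since `A⁻ ⪯ 0`, `H_A(V, Z) = Vᴴ A V + (V - Z)ᴴ (-A⁻) (V - Z) ⪰ Vᴴ A V`, with equality at
`Z = V`. In each constraint this moves a point of `F(Z)` into `F(V)`, so every iterate is
feasible for its own problem. In the objective, pairing with `M ⪰ 0` gives
`Tr(M V₊ᴴ A₀ V₊) ≤ Tr(M H(V₊, V_t)) ≤ Tr(M H(V_t, V_t)) = Tr(M V_tᴴ A₀ V_t)`, the middle step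
being the optimality of `V₊` tested against the feasible point `V_t`. -/

namespace Matrix.PosSemidef

variable {ι 𝕜 : Type*} [Fintype ι] [RCLike 𝕜]

open scoped MatrixOrder in
lemma exists_eq_conjTranspose_mul_self_s8 {M : Matrix ι ι 𝕜} (hM : M.PosSemidef) :
    ∃ B : Matrix ι ι 𝕜, M = Bᴴ * B := by
  classical
  exact CStarAlgebra.nonneg_iff_eq_star_mul_self.mp hM.nonneg

lemma map_ofReal_s8 {M : Matrix ι ι ℝ} (hM : M.PosSemidef) :
    (M.map Complex.ofReal).PosSemidef := by
  obtain ⟨B, rfl⟩ := hM.exists_eq_conjTranspose_mul_self_s8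
  have hmap : (Bᴴ * B).map Complex.ofReal = (B.map Complex.ofReal)ᴴ * B.map Complex.ofReal := by
    ext i j
    simp [Matrix.mul_apply, Matrix.conjTranspose_apply]
  rw [hmap]
  exact posSemidef_conjTranspose_mul_self _

lemma trace_mul_nonneg_s8 {M X : Matrix ι ι 𝕜} (hM : M.PosSemidef) (hX : X.PosSemidef) :
    0 ≤ (M * X).trace := by
  obtain ⟨S, rfl⟩ := hM.exists_eq_conjTranspose_mul_self_s8
  rw [Matrix.mul_assoc, trace_mul_comm]
  simpa [Matrix.mul_assoc] using (hX.mul_mul_conjTranspose_same S).trace_nonneg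

lemma trace_mul_le_trace_mul_s8 {M A B : Matrix ι ι 𝕜} (hM : M.PosSemidef)
    (hAB : (B - A).PosSemidef) : (M * A).trace ≤ (M * B).trace := by
  simpa [Matrix.mul_sub, trace_sub] using hM.trace_mul_nonneg_s8 hAB

end Matrix.PosSemidef

section Hmat

variable {n k : ℕ} (Ap Am : Matrix (Fin n) (Fin n) ℂ) (V Z : Matrix (Fin n) (Fin k) ℂ)

lemma Hmat_eq_add_conjTranspose_mul_mul :
    Hmat Ap Am V Z = Vᴴ * (Ap + Am) * V + (V - Z)ᴴ * (-Am) * (V - Z) := by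
  simp only [Hmat, conjTranspose_sub, Matrix.sub_mul, Matrix.mul_sub, Matrix.mul_neg,
    Matrix.add_mul, Matrix.mul_add, neg_sub]
  abel

lemma Hmat_self : Hmat Ap Am V V = Vᴴ * (Ap + Am) * V := by
  simp [Hmat_eq_add_conjTranspose_mul_mul]

lemma posSemidef_Hmat_sub {Am : Matrix (Fin n) (Fin n) ℂ} (hAm : (-Am).PosSemidef) :
    (Hmat Ap Am V Z - Vᴴ * (Ap + Am) * V).PosSemidef := by
  rw [Hmat_eq_add_conjTranspose_mul_mul, add_sub_cancel_left]
  exact hAm.conjTranspose_mul_mul_same _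

end Hmat

lemma Feas.at_self {n k ℓ m p q : ℕ} [NeZero k]
    {W : Fin ℓ → Matrix (Fin k) (Fin k) ℝ} {Ap Am : Fin m → Matrix (Fin n) (Fin n) ℂ}
    {C : Fin m → Matrix (Fin k) (Fin k) ℝ} {b : Fin m → (Fin p → ℝ)}
    {E : Matrix (Fin q) (Fin p) ℝ} {f : Fin q → ℝ} {Z : Matrix (Fin n) (Fin k) ℂ}
    {x : Fin p → ℝ} {V : Matrix (Fin n) (Fin k) ℂ} {Λ : Matrix (Fin m) (Fin ℓ) ℝ}
    (hAm : ∀ i, (-(Am i)).PosSemidef) (h : Feas W Ap Am C b E f Z x V Λ) :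
    Feas W Ap Am C b E f V x V Λ := by
  refine ⟨h.1, h.2.1, fun i => ?_⟩
  convert (h.2.2 i).add (posSemidef_Hmat_sub (Ap i) V Z (hAm i)) using 1
  rw [Hmat_self]
  abel

theorem stmt8_general {n k ℓ m p q : ℕ} [NeZero k]
    (W : Fin ℓ → Matrix (Fin k) (Fin k) ℝ)
    (A₀ Ap₀ Am₀ : Matrix (Fin n) (Fin n) ℂ)
    (hAm₀ : (-Am₀).PosSemidef) (hdec₀ : A₀ = Ap₀ + Am₀)
    (Ap Am : Fin m → Matrix (Fin n) (Fin n) ℂ)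
    (hAm : ∀ i, (-(Am i)).PosSemidef)
    (C : Fin m → Matrix (Fin k) (Fin k) ℝ)
    (b : Fin m → (Fin p → ℝ))
    (E : Matrix (Fin q) (Fin p) ℝ) (f : Fin q → ℝ)
    (M : Matrix (Fin k) (Fin k) ℝ) (hM : M.PosSemidef)
    (xs : ℕ → (Fin p → ℝ)) (Vs : ℕ → Matrix (Fin n) (Fin k) ℂ)
    (Ls : ℕ → Matrix (Fin m) (Fin ℓ) ℝ)
    (h0 : Feas W Ap Am C b E f (Vs 0) (xs 0) (Vs 0) (Ls 0))
    (hstep : ∀ t : ℕ, Feas W Ap Am C b E f (Vs t) (xs (t + 1)) (Vs (t + 1)) (Ls (t + 1)))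
    (hopt : ∀ t : ℕ, ∀ x : Fin p → ℝ, ∀ V : Matrix (Fin n) (Fin k) ℂ,
      ∀ Λ : Matrix (Fin m) (Fin ℓ) ℝ, Feas W Ap Am C b E f (Vs t) x V Λ →
        ((M.map Complex.ofReal) * Hmat Ap₀ Am₀ (Vs (t + 1)) (Vs t)).trace.re
          ≤ ((M.map Complex.ofReal) * Hmat Ap₀ Am₀ V (Vs t)).trace.re) :
    ∀ t : ℕ,
      Feas W Ap Am C b E f (Vs t) (xs t) (Vs t) (Ls t) ∧
      ((M.map Complex.ofReal) * ((Vs (t + 1))ᴴ * A₀ * (Vs (t + 1)))).trace.re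
        ≤ ((M.map Complex.ofReal) * ((Vs t)ᴴ * A₀ * (Vs t))).trace.re := by
  subst hdec₀
  have hfeas : ∀ t, Feas W Ap Am C b E f (Vs t) (xs t) (Vs t) (Ls t)
    | 0 => h0
    | s + 1 => (hstep s).at_self hAm
  intro t
  refine ⟨hfeas t, ?_⟩
  have majorize := (Complex.le_def.mp <| hM.map_ofReal_s8.trace_mul_le_trace_mul_s8
    (posSemidef_Hmat_sub Ap₀ (Vs (t + 1)) (Vs t) hAm₀)).1
  have descent := hopt t (xs t) (Vs t) (Ls t) (hfeas t)
  rw [Hmat_self] at descent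
  exact majorize.trans descent

/-- **Proposition 3.** Let `M ∈ ℝ^{k×k}` be symmetric positive
semidefinite.  Suppose `(x₀, V₀, Λ₀) ∈ F(V₀)`, and a sequence `(x_t, V_t, Λ_t)`
satisfies, for every `t ≥ 0`, `(x_{t+1}, V_{t+1}, Λ_{t+1}) ∈ F(V_t)` together with the
optimality condition `Tr(M H_{A₀}(V_{t+1}, V_t)) ≤ Tr(M H_{A₀}(V, V_t))` for every
`(x, V, Λ) ∈ F(V_t)`.  Then for every `t ≥ 0`: (i) `(x_t, V_t, Λ_t) ∈ F(V_t)` (so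
`F(V_t)` is nonempty), and (ii)
`Tr(M V_{t+1}ᴴ A₀ V_{t+1}) ≤ Tr(M V_tᴴ A₀ V_t)`. -/
theorem stmt8 {n k ℓ m p q : ℕ} [NeZero k]
    (W : Fin ℓ → Matrix (Fin k) (Fin k) ℝ) (hW : ∀ j, (W j).IsSymm)
    (A₀ Ap₀ Am₀ : Matrix (Fin n) (Fin n) ℂ) (hA₀ : A₀.IsHermitian)
    (hAp₀ : Ap₀.PosSemidef) (hAm₀ : (-Am₀).PosSemidef) (hdec₀ : A₀ = Ap₀ + Am₀)
    (A Ap Am : Fin m → Matrix (Fin n) (Fin n) ℂ)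
    (hA : ∀ i, (A i).IsHermitian)
    (hAp : ∀ i, (Ap i).PosSemidef) (hAm : ∀ i, (-(Am i)).PosSemidef)
    (hdec : ∀ i, A i = Ap i + Am i)
    (C : Fin m → Matrix (Fin k) (Fin k) ℝ) (hC : ∀ i, (C i).IsSymm)
    (b : Fin m → (Fin p → ℝ))
    (E : Matrix (Fin q) (Fin p) ℝ) (f : Fin q → ℝ)
    (M : Matrix (Fin k) (Fin k) ℝ) (hM : M.PosSemidef)
    (xs : ℕ → (Fin p → ℝ)) (Vs : ℕ → Matrix (Fin n) (Fin k) ℂ)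
    (Ls : ℕ → Matrix (Fin m) (Fin ℓ) ℝ)
    (h0 : Feas W Ap Am C b E f (Vs 0) (xs 0) (Vs 0) (Ls 0))
    (hstep : ∀ t : ℕ, Feas W Ap Am C b E f (Vs t) (xs (t + 1)) (Vs (t + 1)) (Ls (t + 1)))
    (hopt : ∀ t : ℕ, ∀ x : Fin p → ℝ, ∀ V : Matrix (Fin n) (Fin k) ℂ,
      ∀ Λ : Matrix (Fin m) (Fin ℓ) ℝ, Feas W Ap Am C b E f (Vs t) x V Λ →
        ((M.map Complex.ofReal) * Hmat Ap₀ Am₀ (Vs (t + 1)) (Vs t)).trace.re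
          ≤ ((M.map Complex.ofReal) * Hmat Ap₀ Am₀ V (Vs t)).trace.re) :
    ∀ t : ℕ,
      Feas W Ap Am C b E f (Vs t) (xs t) (Vs t) (Ls t) ∧
      ((M.map Complex.ofReal) * ((Vs (t + 1))ᴴ * A₀ * (Vs (t + 1)))).trace.re
        ≤ ((M.map Complex.ofReal) * ((Vs t)ᴴ * A₀ * (Vs t))).trace.re :=
  stmt8_general W A₀ Ap₀ Am₀ hAm₀ hdec₀ Ap Am hAm C b E f M hM xs Vs Ls h0 hstep hopt
end
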